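/- arXiv:2501.13212 — 5 statements merged into one kernel-verified Lean document; each statement's English description precedes it below -/
import Mathlib

section
/- Let ε ≥ 0, let 𝒵 be a finite set, let Z^N = (Z₁, …, Z_N) be a random vector with values in 𝒵^N, and let Q₀ be a PMF on 𝒵 such that the law of Z^N is absolutely continuous with respect to Q₀^{⊗N} and D(P_{Z^N} ‖ Q₀^{⊗N}) ≤ ε. Then (i) Σ_{t=1}^{N} I(Z_t ; Z^{t−1}) ≤ ε, (ii) Σ_{t=1}^{N} I(Z_t ; Z_{t+1}^{N}) ≤ ε, and (iii) if T is uniformly distributed on {1,…,N} and independent of Z^N, then I(T ; Z_T) ≤ ε/N. -/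
open Classical

noncomputable def pOf {Ω α : Type*} [Fintype Ω] (μ : Ω → ℝ) (X : Ω → α) (x : α) : ℝ :=
  ∑ ω, if X ω = x then μ ω else 0

noncomputable def pr {Ω : Type*} [Fintype Ω] (μ : Ω → ℝ) (E : Ω → Prop) : ℝ :=
  ∑ ω, if E ω then μ ω else 0

noncomputable def KL {α : Type*} [Fintype α] (p q : α → ℝ) : ℝ :=
  ∑ x, p x * Real.logb 2 (p x / q x)

noncomputable def TV {α : Type*} [Fintype α] (p q : α → ℝ) : ℝ :=
  (∑ x, |p x - q x|) / 2

noncomputable def Hent {Ω α : Type*} [Fintype Ω] [Fintype α] (μ : Ω → ℝ) (X : Ω → α) : ℝ :=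
  -∑ x, pOf μ X x * Real.logb 2 (pOf μ X x)

noncomputable def condH {Ω α β : Type*} [Fintype Ω] [Fintype α] [Fintype β]
    (μ : Ω → ℝ) (X : Ω → α) (Y : Ω → β) : ℝ :=
  Hent μ (fun ω => (X ω, Y ω)) - Hent μ Y

noncomputable def Iinfo {Ω α β : Type*} [Fintype Ω] [Fintype α] [Fintype β]
    (μ : Ω → ℝ) (X : Ω → α) (Y : Ω → β) : ℝ :=
  Hent μ X + Hent μ Y - Hent μ (fun ω => (X ω, Y ω))

noncomputable def hb (p : ℝ) : ℝ :=
  -(p * Real.logb 2 p) - (1 - p) * Real.logb 2 (1 - p)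

noncomputable def bern (p : ℝ) : Bool → ℝ := fun b => if b then p else 1 - p

/-! ### Auxiliary lemmas -/

section aux
variable {Ω α β : Type*} [Fintype Ω] {μ : Ω → ℝ}

lemma pOf_nonneg (hμ0 : ∀ ω, 0 ≤ μ ω) (X : Ω → α) (x : α) : 0 ≤ pOf μ X x :=
  Finset.sum_nonneg fun ω _ => by by_cases h : X ω = x <;> simp [h, hμ0 ω]

lemma sum_pOf [Fintype α] (X : Ω → α) : ∑ x, pOf μ X x = ∑ ω, μ ω := by
  unfold pOf
  rw [Finset.sum_comm]
  exact Finset.sum_congr rfl fun ω _ => by simp [Finset.sum_ite_eq Finset.univ (X ω)]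

lemma self_le_pOf (hμ0 : ∀ ω, 0 ≤ μ ω) (X : Ω → α) (ω : Ω) : μ ω ≤ pOf μ X (X ω) := by
  have := Finset.single_le_sum (f := fun ω' => if X ω' = X ω then μ ω' else 0)
    (fun i _ => by by_cases h : X i = X ω <;> simp [h, hμ0 i]) (Finset.mem_univ ω)
  simpa [pOf] using this

lemma sum_pOf_comp_mul [Fintype α] [Fintype β] (X : Ω → α) (g : α → β) (c : β → ℝ) :
    ∑ y, pOf μ (fun ω => g (X ω)) y * c y = ∑ x, pOf μ X x * c (g x) := by
  unfold pOf
  simp only [Finset.sum_mul, ite_mul, zero_mul]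
  rw [Finset.sum_comm]
  conv_rhs => rw [Finset.sum_comm]
  refine Finset.sum_congr rfl fun ω _ => ?_
  simp [Finset.sum_ite_eq Finset.univ (g (X ω)), Finset.sum_ite_eq Finset.univ (X ω)]

lemma pOf_pair_le_fst [Fintype α] [Fintype β] (hμ0 : ∀ ω, 0 ≤ μ ω)
    (X : Ω → α) (Y : Ω → β) (x : α) (y : β) :
    pOf μ (fun ω => (X ω, Y ω)) (x, y) ≤ pOf μ X x := by
  refine Finset.sum_le_sum fun ω _ => ?_
  by_cases h : X ω = x <;> by_cases h' : Y ω = y <;> simp [h, h', Prod.ext_iff, hμ0 ω]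

lemma pOf_pair_le_snd [Fintype α] [Fintype β] (hμ0 : ∀ ω, 0 ≤ μ ω)
    (X : Ω → α) (Y : Ω → β) (x : α) (y : β) :
    pOf μ (fun ω => (X ω, Y ω)) (x, y) ≤ pOf μ Y y := by
  refine Finset.sum_le_sum fun ω _ => ?_
  by_cases h : X ω = x <;> by_cases h' : Y ω = y <;> simp [h, h', Prod.ext_iff, hμ0 ω]

lemma KL_eq {α : Type*} [Fintype α] (p q : α → ℝ) (habs : ∀ x, q x = 0 → p x = 0) :
    KL p q = ∑ x, p x * Real.logb 2 (p x) - ∑ x, p x * Real.logb 2 (q x) := by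
  rw [← Finset.sum_sub_distrib]
  refine Finset.sum_congr rfl fun x _ => ?_
  by_cases h : p x = 0
  · simp [h]
  · have hq : q x ≠ 0 := fun h' => h (habs x h')
    rw [Real.logb_div h hq]
    ring

lemma gibbs {α : Type*} [Fintype α] (p q : α → ℝ) (hp : ∀ x, 0 ≤ p x) (hq : ∀ x, 0 ≤ q x)
    (hp1 : ∑ x, p x = 1) (hq1 : ∑ x, q x ≤ 1) (habs : ∀ x, q x = 0 → p x = 0) :
    0 ≤ KL p q := by
  have hlog2 : 0 < Real.log 2 := Real.log_pos one_lt_two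
  have key : ∀ x, (p x - q x) / Real.log 2 ≤ p x * Real.logb 2 (p x / q x) := by
    intro x
    rcases eq_or_lt_of_le (hp x) with h0 | h0
    · rw [← h0, zero_mul]
      exact div_nonpos_of_nonpos_of_nonneg (by linarith [hq x]) (le_of_lt hlog2)
    · have hqx : 0 < q x := lt_of_le_of_ne (hq x) (fun h => by
        have := habs x h.symm; linarith)
      have h1 : Real.log (q x / p x) ≤ q x / p x - 1 :=
        Real.log_le_sub_one_of_pos (div_pos hqx h0)
      have h2 : Real.log (q x / p x) = Real.log (q x) - Real.log (p x) :=
        Real.log_div (ne_of_gt hqx) (ne_of_gt h0)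
      have h3 : p x - q x ≤ p x * (Real.log (p x) - Real.log (q x)) := by
        have := mul_le_mul_of_nonneg_left (h2 ▸ h1) (le_of_lt h0)
        have hne : p x ≠ 0 := ne_of_gt h0
        field_simp at this ⊢
        nlinarith
      rw [Real.logb, Real.log_div (ne_of_gt h0) (ne_of_gt hqx)]
      rw [div_le_iff₀ hlog2]
      calc p x - q x ≤ p x * (Real.log (p x) - Real.log (q x)) := h3
        _ = p x * ((Real.log (p x) - Real.log (q x)) / Real.log 2) * Real.log 2 := by
          field_simp
  calc (0:ℝ) ≤ (1 - ∑ x, q x) / Real.log 2 := by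
        apply div_nonneg (by linarith) (le_of_lt hlog2)
    _ = ∑ x, (p x - q x) / Real.log 2 := by
        rw [← Finset.sum_div, Finset.sum_sub_distrib, hp1]
    _ ≤ KL p q := Finset.sum_le_sum fun x _ => key x

lemma Hent_congr_equiv [Fintype α] [Fintype β] (e : α ≃ β) (X : Ω → α) (Y : Ω → β)
    (h : ∀ ω, Y ω = e (X ω)) : Hent μ Y = Hent μ X := by
  have hp : ∀ y, pOf μ Y y = pOf μ X (e.symm y) := by
    intro y; unfold pOf
    refine Finset.sum_congr rfl fun ω _ => ?_
    have : (Y ω = y) = (X ω = e.symm y) := by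
      rw [h ω]; exact propext (Equiv.apply_eq_iff_eq_symm_apply e)
    rw [this]
  unfold Hent
  congr 1
  rw [show (∑ y, pOf μ Y y * Real.logb 2 (pOf μ Y y))
      = ∑ y, pOf μ X (e.symm y) * Real.logb 2 (pOf μ X (e.symm y)) from
    Finset.sum_congr rfl fun y _ => by rw [hp y]]
  exact Equiv.sum_comp e.symm (fun x => pOf μ X x * Real.logb 2 (pOf μ X x))

lemma Hent_subsingleton [Fintype α] [Subsingleton α] (hμ1 : ∑ ω, μ ω = 1) (X : Ω → α) :
    Hent μ X = 0 := by
  unfold Hent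
  rw [neg_eq_zero]
  refine Finset.sum_eq_zero fun x _ => ?_
  have : pOf μ X x = 1 := by
    unfold pOf; rw [← hμ1]
    exact Finset.sum_congr rfl fun ω _ => by simp [Subsingleton.elim (X ω) x]
  simp [this]

lemma Iinfo_eq_KL [Fintype α] [Fintype β] (hμ0 : ∀ ω, 0 ≤ μ ω)
    (X : Ω → α) (Y : Ω → β) :
    Iinfo μ X Y = KL (pOf μ (fun ω => (X ω, Y ω))) (fun v => pOf μ X v.1 * pOf μ Y v.2) := by
  have hX : ∑ x, pOf μ X x * Real.logb 2 (pOf μ X x)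
      = ∑ v, pOf μ (fun ω => (X ω, Y ω)) v * Real.logb 2 (pOf μ X v.1) := by
    have := sum_pOf_comp_mul (μ := μ) (fun ω => (X ω, Y ω)) Prod.fst
      (fun x => Real.logb 2 (pOf μ X x))
    have h2 : (fun ω => Prod.fst ((X ω, Y ω))) = X := rfl
    rw [h2] at this
    rw [← this]
  have hY : ∑ y, pOf μ Y y * Real.logb 2 (pOf μ Y y)
      = ∑ v, pOf μ (fun ω => (X ω, Y ω)) v * Real.logb 2 (pOf μ Y v.2) := by
    have := sum_pOf_comp_mul (μ := μ) (fun ω => (X ω, Y ω)) Prod.snd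
      (fun y => Real.logb 2 (pOf μ Y y))
    have h2 : (fun ω => Prod.snd ((X ω, Y ω))) = Y := rfl
    rw [h2] at this
    rw [← this]
  have term : ∀ v : α × β,
      pOf μ (fun ω => (X ω, Y ω)) v * Real.logb 2 (pOf μ (fun ω => (X ω, Y ω)) v / (pOf μ X v.1 * pOf μ Y v.2))
      = pOf μ (fun ω => (X ω, Y ω)) v * Real.logb 2 (pOf μ (fun ω => (X ω, Y ω)) v)
        - pOf μ (fun ω => (X ω, Y ω)) v * Real.logb 2 (pOf μ X v.1)
        - pOf μ (fun ω => (X ω, Y ω)) v * Real.logb 2 (pOf μ Y v.2) := by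
    intro v
    rcases eq_or_lt_of_le (pOf_nonneg hμ0 (fun ω => (X ω, Y ω)) v) with h0 | h0
    · rw [← h0]; ring
    · have hvx : pOf μ (fun ω => (X ω, Y ω)) v ≤ pOf μ X v.1 :=
        pOf_pair_le_fst hμ0 X Y v.1 v.2
      have hvy : pOf μ (fun ω => (X ω, Y ω)) v ≤ pOf μ Y v.2 :=
        pOf_pair_le_snd hμ0 X Y v.1 v.2
      have hx : pOf μ X v.1 ≠ 0 := ne_of_gt (lt_of_lt_of_le h0 hvx)
      have hy : pOf μ Y v.2 ≠ 0 := ne_of_gt (lt_of_lt_of_le h0 hvy)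
      rw [Real.logb_div (ne_of_gt h0) (mul_ne_zero hx hy), Real.logb_mul hx hy]
      ring
  unfold Iinfo Hent KL
  rw [hX, hY]
  rw [show (∑ v, pOf μ (fun ω => (X ω, Y ω)) v *
        Real.logb 2 (pOf μ (fun ω => (X ω, Y ω)) v / (pOf μ X v.1 * pOf μ Y v.2)))
      = ∑ v, (pOf μ (fun ω => (X ω, Y ω)) v * Real.logb 2 (pOf μ (fun ω => (X ω, Y ω)) v)
        - pOf μ (fun ω => (X ω, Y ω)) v * Real.logb 2 (pOf μ X v.1)
        - pOf μ (fun ω => (X ω, Y ω)) v * Real.logb 2 (pOf μ Y v.2)) from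
    Finset.sum_congr rfl fun v _ => term v]
  rw [Finset.sum_sub_distrib, Finset.sum_sub_distrib]
  ring

lemma Iinfo_nonneg [Fintype α] [Fintype β] (hμ0 : ∀ ω, 0 ≤ μ ω) (hμ1 : ∑ ω, μ ω = 1)
    (X : Ω → α) (Y : Ω → β) : 0 ≤ Iinfo μ X Y := by
  rw [Iinfo_eq_KL hμ0 X Y]
  refine gibbs _ _ (pOf_nonneg hμ0 _) ?_ ?_ ?_ ?_
  · exact fun v => mul_nonneg (pOf_nonneg hμ0 _ _) (pOf_nonneg hμ0 _ _)
  · rw [sum_pOf, hμ1]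
  · rw [Fintype.sum_prod_type]
    calc (∑ x, ∑ y, pOf μ X x * pOf μ Y y)
        = (∑ x, pOf μ X x) * (∑ y, pOf μ Y y) := by
          rw [Finset.sum_mul]
          exact Finset.sum_congr rfl fun x _ => (Finset.mul_sum _ _ _).symm
      _ ≤ 1 := by rw [sum_pOf, sum_pOf, hμ1]; norm_num
  · intro v hv
    have h1 := pOf_pair_le_fst hμ0 X Y v.1 v.2
    have h2 := pOf_pair_le_snd hμ0 X Y v.1 v.2
    have h0 := pOf_nonneg hμ0 (fun ω => (X ω, Y ω)) v
    rcases mul_eq_zero.mp hv with h | h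
    · have : pOf μ (fun ω => (X ω, Y ω)) (v.1, v.2) ≤ 0 := h ▸ h1
      exact le_antisymm this h0
    · have : pOf μ (fun ω => (X ω, Y ω)) (v.1, v.2) ≤ 0 := h ▸ h2
      exact le_antisymm this h0

end aux

/-! ### Equivalences for the prefix/suffix telescoping -/

def eqTop {N : ℕ} (𝒵 : Type*) (t : Fin N) :
    ({c : Fin N // c.1 < t.1 + 1} → 𝒵) ≃ 𝒵 × ({c : Fin N // c < t} → 𝒵) where
  toFun g := (g ⟨t, Nat.lt_succ_self _⟩, fun c => g ⟨c.1, Nat.lt_succ_of_lt c.2⟩)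
  invFun p c := if h : c.1 = t then p.1 else
    p.2 ⟨c.1, show c.1.1 < t.1 from
      lt_of_le_of_ne (Nat.lt_succ_iff.mp c.2) (fun h' => h (Fin.ext h'))⟩
  left_inv g := by
    funext c
    by_cases h : c.1 = t
    · simp only [dif_pos h]
      congr 1
      exact Subtype.ext h.symm
    · simp only [dif_neg h]
  right_inv p := by
    refine Prod.ext ?_ ?_
    · simp
    · funext c
      have h : c.1 ≠ t := ne_of_lt c.2
      simp only [dif_neg h]

def eqBot {N : ℕ} (𝒵 : Type*) (t : Fin N) :
    ({c : Fin N // t.1 ≤ c.1} → 𝒵) ≃ 𝒵 × ({c : Fin N // t < c} → 𝒵) where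
  toFun g := (g ⟨t, le_refl _⟩, fun c => g ⟨c.1, le_of_lt c.2⟩)
  invFun p c := if h : c.1 = t then p.1 else
    p.2 ⟨c.1, show t.1 < c.1.1 from
      lt_of_le_of_ne c.2 (fun h' => h (Fin.ext h'.symm))⟩
  left_inv g := by
    funext c
    by_cases h : c.1 = t
    · simp only [dif_pos h]
      congr 1
      exact Subtype.ext h.symm
    · simp only [dif_neg h]
  right_inv p := by
    refine Prod.ext ?_ ?_
    · simp
    · funext c
      have h : c.1 ≠ t := ne_of_gt c.2
      simp only [dif_neg h]

def eqLt {N : ℕ} (𝒵 : Type*) (t : Fin N) :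
    ({c : Fin N // c.1 < t.1} → 𝒵) ≃ ({c : Fin N // c < t} → 𝒵) where
  toFun g c := g ⟨c.1, c.2⟩
  invFun g c := g ⟨c.1, c.2⟩
  left_inv _ := rfl
  right_inv _ := rfl

def eqGt {N : ℕ} (𝒵 : Type*) (t : Fin N) :
    ({c : Fin N // t.1 + 1 ≤ c.1} → 𝒵) ≃ ({c : Fin N // t < c} → 𝒵) where
  toFun g c := g ⟨c.1, c.2⟩
  invFun g c := g ⟨c.1, c.2⟩
  left_inv _ := rfl
  right_inv _ := rfl

def eqAll {N : ℕ} (𝒵 : Type*) : (Fin N → 𝒵) ≃ ({c : Fin N // c.1 < N} → 𝒵) where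
  toFun g c := g c.1
  invFun g i := g ⟨i, i.isLt⟩
  left_inv _ := rfl
  right_inv _ := rfl

def eqAll0 {N : ℕ} (𝒵 : Type*) : (Fin N → 𝒵) ≃ ({c : Fin N // 0 ≤ c.1} → 𝒵) where
  toFun g c := g c.1
  invFun g i := g ⟨i, Nat.zero_le _⟩
  left_inv _ := rfl
  right_inv _ := rfl

/-- If `D(P_{Z^N} ‖ Q₀^{⊗N}) ≤ ε` then
(i) `∑_t I(Z_t ; Z^{t−1}) ≤ ε`, (ii) `∑_t I(Z_t ; Z_{t+1}^N) ≤ ε`, and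
(iii) for `T` uniform on `{1,…,N}` independent of `Z^N` (realized on the product space
`Ω × Fin N` with weights `μ(ω)/N`), `I(T ; Z_T) ≤ ε/N`. -/
theorem stmt2 {Ω 𝒵 : Type*} [Fintype Ω] [Fintype 𝒵]
    (μ : Ω → ℝ) (hμ0 : ∀ ω, 0 ≤ μ ω) (hμ1 : ∑ ω, μ ω = 1)
    {N : ℕ} (hN : 0 < N) (Z : Ω → Fin N → 𝒵)
    (Q0 : 𝒵 → ℝ) (hQ0 : ∀ z, 0 ≤ Q0 z) (hQ1 : ∑ z, Q0 z = 1)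
    (habs : ∀ f : Fin N → 𝒵, (∏ t, Q0 (f t)) = 0 → pOf μ Z f = 0)
    (ε : ℝ) (hε : 0 ≤ ε)
    (hKL : KL (pOf μ Z) (fun f => ∏ t, Q0 (f t)) ≤ ε) :
    (∑ t : Fin N, Iinfo μ (fun ω => Z ω t)
        (fun ω => fun c : {c : Fin N // c < t} => Z ω c.1) ≤ ε)
    ∧ (∑ t : Fin N, Iinfo μ (fun ω => Z ω t)
        (fun ω => fun c : {c : Fin N // t < c} => Z ω c.1) ≤ ε)
    ∧ Iinfo (fun p : Ω × Fin N => μ p.1 / N)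
        (fun p => p.2) (fun p => Z p.1 p.2) ≤ ε / N := by
  have hNR : (0:ℝ) < (N:ℝ) := by exact_mod_cast hN
  have hNne : (N:ℝ) ≠ 0 := ne_of_gt hNR
  set pm : Fin N → 𝒵 → ℝ := fun t z => pOf μ (fun ω => Z ω t) z with hpm
  -- marginal absolute continuity
  have habs_t : ∀ (t : Fin N) (z : 𝒵), Q0 z = 0 → pm t z = 0 := by
    intro t z hz
    refine Finset.sum_eq_zero fun ω _ => ?_
    by_cases h : Z ω t = z
    · have h1 : pOf μ Z (Z ω) = 0 :=
        habs _ (Finset.prod_eq_zero (Finset.mem_univ t) (by rw [h]; exact hz))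
      have h2 : μ ω ≤ pOf μ Z (Z ω) := self_le_pOf hμ0 Z ω
      have : μ ω = 0 := le_antisymm (h1 ▸ h2) (hμ0 ω)
      simp [h, this]
    · simp [h]
  have hp0 : ∀ (t : Fin N) (z : 𝒵), 0 ≤ pm t z := fun t z => pOf_nonneg hμ0 _ z
  have hp1 : ∀ t : Fin N, ∑ z, pm t z = 1 := fun t => by rw [hpm]; rw [sum_pOf, hμ1]
  -- change of variables
  have marg : ∀ (t : Fin N) (c : 𝒵 → ℝ),
      ∑ z, pm t z * c z = ∑ f, pOf μ Z f * c (f t) := by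
    intro t c
    have := sum_pOf_comp_mul (μ := μ) Z (fun f => f t) c
    have h2 : (fun ω => (fun f : Fin N → 𝒵 => f t) (Z ω)) = fun ω => Z ω t := rfl
    rw [h2] at this
    exact this
  -- the basic decomposition of the full KL
  have C1 : KL (pOf μ Z) (fun f => ∏ t, Q0 (f t))
      = (∑ f, pOf μ Z f * Real.logb 2 (pOf μ Z f))
        - ∑ t : Fin N, ∑ z, pm t z * Real.logb 2 (Q0 z) := by
    have hQav : ∀ f : Fin N → 𝒵, pOf μ Z f ≠ 0 → ∀ t, Q0 (f t) ≠ 0 := by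
      intro f hf t h
      exact hf (habs f (Finset.prod_eq_zero (Finset.mem_univ t) h))
    have term : ∀ f : Fin N → 𝒵,
        pOf μ Z f * Real.logb 2 (pOf μ Z f / ∏ t, Q0 (f t))
        = pOf μ Z f * Real.logb 2 (pOf μ Z f)
          - ∑ t : Fin N, pOf μ Z f * Real.logb 2 (Q0 (f t)) := by
      intro f
      by_cases hf : pOf μ Z f = 0
      · simp [hf]
      · rw [Real.logb_div hf (Finset.prod_ne_zero_iff.mpr fun t _ => hQav f hf t),
          Real.logb_prod Finset.univ _ (fun t _ => hQav f hf t), mul_sub, Finset.mul_sum]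
    unfold KL
    rw [show (∑ f, pOf μ Z f * Real.logb 2 (pOf μ Z f / ∏ t, Q0 (f t)))
        = ∑ f, (pOf μ Z f * Real.logb 2 (pOf μ Z f)
          - ∑ t : Fin N, pOf μ Z f * Real.logb 2 (Q0 (f t))) from
      Finset.sum_congr rfl fun f _ => term f]
    rw [Finset.sum_sub_distrib]
    congr 1
    rw [Finset.sum_comm]
    exact Finset.sum_congr rfl fun t _ => (marg t (fun z => Real.logb 2 (Q0 z))).symm
  -- marginal KLs
  have C2 : ∀ t : Fin N, KL (pm t) Q0
      = (∑ z, pm t z * Real.logb 2 (pm t z)) - ∑ z, pm t z * Real.logb 2 (Q0 z) :=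
    fun t => KL_eq (pm t) Q0 (fun z hz => habs_t t z hz)
  have hHZ : Hent μ Z = -∑ f, pOf μ Z f * Real.logb 2 (pOf μ Z f) := rfl
  have hHt : ∀ t : Fin N, Hent μ (fun ω => Z ω t)
      = -∑ z, pm t z * Real.logb 2 (pm t z) := fun t => rfl
  -- total decomposition
  have Etot : KL (pOf μ Z) (fun f => ∏ t, Q0 (f t))
      = ((∑ t : Fin N, Hent μ (fun ω => Z ω t)) - Hent μ Z)
        + ∑ t : Fin N, KL (pm t) Q0 := by
    rw [C1, hHZ]
    rw [show (∑ t : Fin N, Hent μ (fun ω => Z ω t))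
        = -∑ t : Fin N, ∑ z, pm t z * Real.logb 2 (pm t z) by
      rw [← Finset.sum_neg_distrib]; exact Finset.sum_congr rfl fun t _ => hHt t]
    rw [show (∑ t : Fin N, KL (pm t) Q0)
        = (∑ t : Fin N, ∑ z, pm t z * Real.logb 2 (pm t z))
          - ∑ t : Fin N, ∑ z, pm t z * Real.logb 2 (Q0 z) by
      rw [← Finset.sum_sub_distrib]; exact Finset.sum_congr rfl fun t _ => C2 t]
    ring
  -- nonnegativity of the marginal KLs
  have hKLt : ∀ t : Fin N, 0 ≤ KL (pm t) Q0 := fun t =>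
    gibbs (pm t) Q0 (hp0 t) hQ0 (hp1 t) (le_of_eq hQ1) (fun z hz => habs_t t z hz)
  -- prefix telescoping
  set F : ℕ → ℝ := fun k => Hent μ (fun ω => fun c : {c : Fin N // c.1 < k} => Z ω c.1)
    with hF
  have T1 : ∑ t : Fin N, Iinfo μ (fun ω => Z ω t)
      (fun ω => fun c : {c : Fin N // c < t} => Z ω c.1)
      = ((∑ t : Fin N, Hent μ (fun ω => Z ω t)) - Hent μ Z) := by
    have step : ∀ t : Fin N, Iinfo μ (fun ω => Z ω t)
        (fun ω => fun c : {c : Fin N // c < t} => Z ω c.1)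
        = Hent μ (fun ω => Z ω t) + (F t.1 - F (t.1 + 1)) := by
      intro t
      unfold Iinfo
      rw [show Hent μ (fun ω => fun c : {c : Fin N // c < t} => Z ω c.1) = F t.1 from
        Hent_congr_equiv (eqLt 𝒵 t) _ _ (fun ω => rfl)]
      rw [show Hent μ (fun ω => (Z ω t, fun c : {c : Fin N // c < t} => Z ω c.1))
          = F (t.1 + 1) from
        Hent_congr_equiv (eqTop 𝒵 t) _ _ (fun ω => rfl)]
      ring
    rw [Finset.sum_congr rfl fun t _ => step t, Finset.sum_add_distrib]
    have htel : ∑ t : Fin N, (F t.1 - F (t.1 + 1)) = F 0 - F N := by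
      rw [Fin.sum_univ_eq_sum_range (fun i => F i - F (i + 1)) N]
      exact Finset.sum_range_sub' F N
    have hF0 : F 0 = 0 := by
      haveI : IsEmpty {c : Fin N // c.1 < 0} := ⟨fun c => Nat.not_lt_zero _ c.2⟩
      exact Hent_subsingleton hμ1 _
    have hFN : F N = Hent μ Z := Hent_congr_equiv (eqAll 𝒵) Z _ (fun ω => rfl)
    rw [htel, hF0, hFN]
    ring
  -- suffix telescoping
  set G : ℕ → ℝ := fun k => Hent μ (fun ω => fun c : {c : Fin N // k ≤ c.1} => Z ω c.1)
    with hG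
  have T2 : ∑ t : Fin N, Iinfo μ (fun ω => Z ω t)
      (fun ω => fun c : {c : Fin N // t < c} => Z ω c.1)
      = ((∑ t : Fin N, Hent μ (fun ω => Z ω t)) - Hent μ Z) := by
    have step : ∀ t : Fin N, Iinfo μ (fun ω => Z ω t)
        (fun ω => fun c : {c : Fin N // t < c} => Z ω c.1)
        = Hent μ (fun ω => Z ω t) + (G (t.1 + 1) - G t.1) := by
      intro t
      unfold Iinfo
      rw [show Hent μ (fun ω => fun c : {c : Fin N // t < c} => Z ω c.1) = G (t.1 + 1) from
        Hent_congr_equiv (eqGt 𝒵 t) _ _ (fun ω => rfl)]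
      rw [show Hent μ (fun ω => (Z ω t, fun c : {c : Fin N // t < c} => Z ω c.1))
          = G t.1 from
        Hent_congr_equiv (eqBot 𝒵 t) _ _ (fun ω => rfl)]
      ring
    rw [Finset.sum_congr rfl fun t _ => step t, Finset.sum_add_distrib]
    have htel : ∑ t : Fin N, (G (t.1 + 1) - G t.1) = G N - G 0 := by
      rw [Fin.sum_univ_eq_sum_range (fun i => G (i + 1) - G i) N]
      exact Finset.sum_range_sub G N
    have hGN : G N = 0 := by
      haveI : IsEmpty {c : Fin N // N ≤ c.1} :=
        ⟨fun c => absurd c.2 (not_le.mpr c.1.isLt)⟩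
      exact Hent_subsingleton hμ1 _
    have hG0 : G 0 = Hent μ Z := Hent_congr_equiv (eqAll0 𝒵) Z _ (fun ω => rfl)
    rw [htel, hGN, hG0]
    ring
  -- SH nonneg and bound
  have SHnn : 0 ≤ (∑ t : Fin N, Hent μ (fun ω => Z ω t)) - Hent μ Z := by
    rw [← T1]
    exact Finset.sum_nonneg fun t _ => Iinfo_nonneg hμ0 hμ1 _ _
  have hsumKLt : ∑ t : Fin N, KL (pm t) Q0 ≤ ε := by
    have := Etot ▸ hKL
    linarith
  have SHle : (∑ t : Fin N, Hent μ (fun ω => Z ω t)) - Hent μ Z ≤ ε := by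
    have h1 : 0 ≤ ∑ t : Fin N, KL (pm t) Q0 :=
      Finset.sum_nonneg fun t _ => hKLt t
    have := Etot ▸ hKL
    linarith
  refine ⟨T1 ▸ SHle, T2 ▸ SHle, ?_⟩
  -- part (iii)
  set ν : Ω × Fin N → ℝ := fun p => μ p.1 / N with hν
  have hν0 : ∀ p : Ω × Fin N, 0 ≤ ν p := fun p => div_nonneg (hμ0 p.1) (le_of_lt hNR)
  set qb : 𝒵 → ℝ := fun z => (∑ s : Fin N, pm s z) / N with hqb
  have hqb0 : ∀ z, 0 ≤ qb z := fun z =>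
    div_nonneg (Finset.sum_nonneg fun s _ => hp0 s z) (le_of_lt hNR)
  have hqbsum : ∀ z, ∑ s : Fin N, pm s z = N * qb z := by
    intro z
    show _ = (N:ℝ) * ((∑ s : Fin N, pm s z) / N)
    field_simp
  have hqb1 : ∑ z, qb z = 1 := by
    show (∑ z, (∑ s : Fin N, pm s z) / (N:ℝ)) = 1
    rw [← Finset.sum_div, Finset.sum_comm]
    rw [Finset.sum_congr rfl fun s (_ : s ∈ Finset.univ) => hp1 s]
    simp [hNne]
  have habs_qb : ∀ z, Q0 z = 0 → qb z = 0 := by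
    intro z hz
    show (∑ s : Fin N, pm s z) / (N:ℝ) = 0
    rw [Finset.sum_eq_zero fun s _ => habs_t s z hz]
    simp
  have h_pm_le : ∀ (t : Fin N) (z : 𝒵), pm t z ≤ N * qb z := by
    intro t z
    rw [← hqbsum]
    exact Finset.single_le_sum (fun s _ => hp0 s z) (Finset.mem_univ t)
  have habs_pq : ∀ (t : Fin N) (z : 𝒵), qb z = 0 → pm t z = 0 := by
    intro t z hz
    have h := h_pm_le t z
    rw [hz, mul_zero] at h
    exact le_antisymm h (hp0 t z)
  -- distributions on the product space
  have hT : ∀ t : Fin N, pOf ν (fun p : Ω × Fin N => p.2) t = 1 / N := by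
    intro t
    unfold pOf
    simp only [Fintype.sum_prod_type, hν]
    have step : ∀ ω : Ω, (∑ s : Fin N, if s = t then μ ω / N else 0) = μ ω / N :=
      fun ω => by simp
    rw [Finset.sum_congr rfl fun ω _ => step ω, ← Finset.sum_div, hμ1]
  have hpair : ∀ (t : Fin N) (z : 𝒵),
      pOf ν (fun p : Ω × Fin N => (p.2, Z p.1 p.2)) (t, z) = pm t z / N := by
    intro t z
    unfold pOf
    simp only [Fintype.sum_prod_type, hν]
    have step1 : ∀ ω : Ω, (∑ s : Fin N, if (s, Z ω s) = (t, z) then μ ω / N else 0)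
        = if Z ω t = z then μ ω / N else 0 := by
      intro ω
      have h1 : ∀ s : Fin N, (if (s, Z ω s) = (t, z) then μ ω / N else 0)
          = if s = t then (if Z ω s = z then μ ω / N else 0) else 0 := by
        intro s
        by_cases h1 : s = t <;> by_cases h2 : Z ω s = z <;>
          simp [h1, h2, Prod.ext_iff]
      rw [Finset.sum_congr rfl fun s _ => h1 s]
      simp
    rw [Finset.sum_congr rfl fun ω _ => step1 ω]
    show _ = (∑ ω, if Z ω t = z then μ ω else 0) / N
    rw [Finset.sum_div]
    exact Finset.sum_congr rfl fun ω _ => by by_cases h : Z ω t = z <;> simp [h]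
  have hYm : ∀ z : 𝒵, pOf ν (fun p : Ω × Fin N => Z p.1 p.2) z = qb z := by
    intro z
    unfold pOf
    simp only [Fintype.sum_prod_type, hν]
    rw [Finset.sum_comm]
    show _ = (∑ s : Fin N, pm s z) / (N:ℝ)
    rw [Finset.sum_div]
    refine Finset.sum_congr rfl fun s _ => ?_
    show _ = (∑ ω, if Z ω s = z then μ ω else 0) / N
    rw [Finset.sum_div]
    exact Finset.sum_congr rfl fun ω _ => by by_cases h : Z ω s = z <;> simp [h]
  -- entropies on the product space
  have HentX : Hent ν (fun p : Ω × Fin N => p.2) = Real.logb 2 N := by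
    unfold Hent
    rw [Finset.sum_congr rfl fun t (_ : t ∈ Finset.univ) => by rw [hT t]]
    rw [Finset.sum_const, Finset.card_univ, Fintype.card_fin, nsmul_eq_mul]
    rw [one_div, Real.logb_inv]
    field_simp
  have HentY : Hent ν (fun p : Ω × Fin N => Z p.1 p.2)
      = -∑ z, qb z * Real.logb 2 (qb z) := by
    unfold Hent
    congr 1
    exact Finset.sum_congr rfl fun z _ => by rw [hYm z]
  have HentP : Hent ν (fun p : Ω × Fin N => (p.2, Z p.1 p.2))
      = Real.logb 2 N - (∑ t : Fin N, ∑ z, pm t z * Real.logb 2 (pm t z)) / N := by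
    unfold Hent
    rw [Fintype.sum_prod_type]
    have step1 : ∀ (t : Fin N) (z : 𝒵),
        pOf ν (fun p : Ω × Fin N => (p.2, Z p.1 p.2)) (t, z)
          * Real.logb 2 (pOf ν (fun p : Ω × Fin N => (p.2, Z p.1 p.2)) (t, z))
        = (pm t z * Real.logb 2 (pm t z)) / N - (pm t z * Real.logb 2 N) / N := by
      intro t z
      rw [hpair t z]
      by_cases h : pm t z = 0
      · simp [h]
      · rw [Real.logb_div h hNne]
        ring
    rw [Finset.sum_congr rfl fun t (_ : t ∈ Finset.univ) =>
      Finset.sum_congr rfl fun z (_ : z ∈ Finset.univ) => step1 t z]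
    have split : ∑ t : Fin N, ∑ z, ((pm t z * Real.logb 2 (pm t z)) / N
        - (pm t z * Real.logb 2 N) / N)
        = (∑ t : Fin N, ∑ z, pm t z * Real.logb 2 (pm t z)) / N - Real.logb 2 N := by
      rw [Finset.sum_congr rfl fun t (_ : t ∈ Finset.univ) => Finset.sum_sub_distrib _ _]
      rw [Finset.sum_sub_distrib]
      congr 1
      · rw [Finset.sum_div]
        exact Finset.sum_congr rfl fun t _ => (Finset.sum_div _ _ _).symm
      · have : ∀ t : Fin N, (∑ z, (pm t z * Real.logb 2 N) / N) = Real.logb 2 N / N := by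
          intro t
          rw [← Finset.sum_div, ← Finset.sum_mul, hp1 t, one_mul]
        rw [Finset.sum_congr rfl fun t (_ : t ∈ Finset.univ) => this t]
        rw [Finset.sum_const, Finset.card_univ, Fintype.card_fin, nsmul_eq_mul]
        field_simp
    rw [split]
    ring
  -- I(T; Z_T) as an average of KLs
  have IKL : Iinfo ν (fun p : Ω × Fin N => p.2) (fun p : Ω × Fin N => Z p.1 p.2)
      = (∑ t : Fin N, KL (pm t) qb) / N := by
    have hpairfun : (fun p : Ω × Fin N => ((fun p : Ω × Fin N => p.2) p,
        (fun p : Ω × Fin N => Z p.1 p.2) p)) = fun p : Ω × Fin N => (p.2, Z p.1 p.2) := rfl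
    unfold Iinfo
    rw [hpairfun, HentX, HentY, HentP]
    have hKLsum : ∑ t : Fin N, KL (pm t) qb
        = (∑ t : Fin N, ∑ z, pm t z * Real.logb 2 (pm t z))
          - N * ∑ z, qb z * Real.logb 2 (qb z) := by
      rw [Finset.sum_congr rfl fun t (_ : t ∈ Finset.univ) =>
        KL_eq (pm t) qb (fun z hz => habs_pq t z hz)]
      rw [Finset.sum_sub_distrib]
      congr 1
      rw [Finset.sum_comm]
      rw [Finset.sum_congr rfl fun z (_ : z ∈ Finset.univ) =>
        (Finset.sum_mul _ _ _).symm]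
      rw [Finset.mul_sum]
      exact Finset.sum_congr rfl fun z _ => by rw [hqbsum z]; ring
    rw [hKLsum]
    field_simp
    ring
  -- compensation identity
  have Lcomp : ∑ t : Fin N, KL (pm t) qb
      = (∑ t : Fin N, KL (pm t) Q0) - N * KL qb Q0 := by
    have h1 : ∑ t : Fin N, KL (pm t) Q0
        = (∑ t : Fin N, ∑ z, pm t z * Real.logb 2 (pm t z))
          - N * ∑ z, qb z * Real.logb 2 (Q0 z) := by
      rw [Finset.sum_congr rfl fun t (_ : t ∈ Finset.univ) =>
        KL_eq (pm t) Q0 (fun z hz => habs_t t z hz)]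
      rw [Finset.sum_sub_distrib]
      congr 1
      rw [Finset.sum_comm]
      rw [Finset.sum_congr rfl fun z (_ : z ∈ Finset.univ) =>
        (Finset.sum_mul _ _ _).symm]
      rw [Finset.mul_sum]
      exact Finset.sum_congr rfl fun z _ => by rw [hqbsum z]; ring
    have h2 : ∑ t : Fin N, KL (pm t) qb
        = (∑ t : Fin N, ∑ z, pm t z * Real.logb 2 (pm t z))
          - N * ∑ z, qb z * Real.logb 2 (qb z) := by
      rw [Finset.sum_congr rfl fun t (_ : t ∈ Finset.univ) =>
        KL_eq (pm t) qb (fun z hz => habs_pq t z hz)]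
      rw [Finset.sum_sub_distrib]
      congr 1
      rw [Finset.sum_comm]
      rw [Finset.sum_congr rfl fun z (_ : z ∈ Finset.univ) =>
        (Finset.sum_mul _ _ _).symm]
      rw [Finset.mul_sum]
      exact Finset.sum_congr rfl fun z _ => by rw [hqbsum z]; ring
    have h3 : KL qb Q0 = (∑ z, qb z * Real.logb 2 (qb z))
        - ∑ z, qb z * Real.logb 2 (Q0 z) := KL_eq qb Q0 habs_qb
    rw [h1, h2, h3]
    ring
  have KLqb_nn : 0 ≤ KL qb Q0 :=
    gibbs qb Q0 hqb0 hQ0 hqb1 (le_of_eq hQ1) habs_qb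
  rw [IKL]
  have hfinal : ∑ t : Fin N, KL (pm t) qb ≤ ε := by
    rw [Lcomp]
    nlinarith [hsumKLt, KLqb_nn, hNR]
  gcongr
end

section
/- Let 𝒵 be a finite set and Q a PMF on 𝒵 with full support. There exists a constant k > 0, depending only on 𝒵 and Q, such that for every n ≥ 1 and every PMF P on 𝒵ⁿ that is absolutely continuous with respect to Q^{⊗n} and satisfies 0 < V(P, Q^{⊗n}) ≤ 1/2, one has D(P ‖ Q^{⊗n}) ≤ k · ( n + log₂(1 / V(P, Q^{⊗n})) ) · V(P, Q^{⊗n}). Consequently, if a sequence (Pₙ)ₙ, with Pₙ a PMF on 𝒵ⁿ absolutely continuous with respect to Q^{⊗n}, satisfies V(Pₙ, Q^{⊗n}) ≤ c·2^{−γn} for some constants c > 0 and γ > 0, then D(Pₙ ‖ Q^{⊗n}) → 0 as n → ∞. -/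
open Classical

section aux

open Finset Real

lemma tv_eq_sum_filter {α : Type*} [Fintype α] (p q : α → ℝ)
    (hp1 : ∑ x, p x = 1) (hq1 : ∑ x, q x = 1) :
    ∑ x ∈ Finset.univ.filter (fun x => q x < p x), (p x - q x) = TV p q := by
  classical
  have h0 : (∑ x ∈ Finset.univ.filter (fun x => q x < p x), (p x - q x))
      + ∑ x ∈ Finset.univ.filter (fun x => ¬ q x < p x), (p x - q x) = 0 := by
    rw [Finset.sum_filter_add_sum_filter_not, Finset.sum_sub_distrib, hp1, hq1]; ring
  have habs : ∑ x, |p x - q x|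
      = (∑ x ∈ Finset.univ.filter (fun x => q x < p x), (p x - q x))
      + ∑ x ∈ Finset.univ.filter (fun x => ¬ q x < p x), (q x - p x) := by
    rw [← Finset.sum_filter_add_sum_filter_not Finset.univ (fun x => q x < p x)
      (fun x => |p x - q x|)]
    congr 1
    · exact Finset.sum_congr rfl fun x hx => abs_of_pos
        (by have := (Finset.mem_filter.mp hx).2; linarith)
    · rw [show (∑ x ∈ Finset.univ.filter (fun x => ¬ q x < p x), (q x - p x))
          = ∑ x ∈ Finset.univ.filter (fun x => ¬ q x < p x), -(p x - q x) by
        apply Finset.sum_congr rfl; intros; ring]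
      exact Finset.sum_congr rfl fun x hx => abs_of_nonpos
        (by have := (Finset.mem_filter.mp hx).2; push_neg at this; linarith)
  have h2 : ∑ x ∈ Finset.univ.filter (fun x => ¬ q x < p x), (q x - p x)
      = ∑ x ∈ Finset.univ.filter (fun x => q x < p x), (p x - q x) := by
    have : ∑ x ∈ Finset.univ.filter (fun x => ¬ q x < p x), (q x - p x)
        = - ∑ x ∈ Finset.univ.filter (fun x => ¬ q x < p x), (p x - q x) := by
      rw [← Finset.sum_neg_distrib]; apply Finset.sum_congr rfl; intros; ring
    rw [this]; linarith
  rw [TV]; rw [habs, h2]; ring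

lemma kl_le_tv {α : Type*} [Fintype α] (p q : α → ℝ)
    (hp0 : ∀ x, 0 ≤ p x) (hp1 : ∑ x, p x = 1)
    (hq0 : ∀ x, 0 < q x) (hq1 : ∑ x, q x = 1)
    (B : ℝ) (hB : ∀ x, q x < p x → Real.logb 2 (p x / q x) ≤ B) :
    KL p q ≤ (B + 1 / Real.log 2) * TV p q := by
  classical
  have hlog2 : (0:ℝ) < Real.log 2 := Real.log_pos one_lt_two
  have key : KL p q ≤ ∑ x ∈ Finset.univ.filter (fun x => q x < p x),
      (p x - q x) * (B + 1 / Real.log 2) := by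
    rw [KL, ← Finset.sum_filter_add_sum_filter_not Finset.univ (fun x => q x < p x)
      (fun x => p x * Real.logb 2 (p x / q x))]
    have hneg : ∑ x ∈ Finset.univ.filter (fun x => ¬ q x < p x),
        p x * Real.logb 2 (p x / q x) ≤ 0 := by
      apply Finset.sum_nonpos
      intro x hx
      have hle : p x ≤ q x := by have := (Finset.mem_filter.mp hx).2; push_neg at this; exact this
      rcases eq_or_lt_of_le (hp0 x) with h | h
      · simp [← h]
      · have : Real.logb 2 (p x / q x) ≤ 0 := Real.logb_nonpos one_lt_two
          (div_nonneg (hp0 x) (hq0 x).le) (by rw [div_le_one (hq0 x)]; exact hle)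
        exact mul_nonpos_of_nonneg_of_nonpos (hp0 x) this
    have hpos : ∑ x ∈ Finset.univ.filter (fun x => q x < p x),
        p x * Real.logb 2 (p x / q x)
        ≤ ∑ x ∈ Finset.univ.filter (fun x => q x < p x),
          (p x - q x) * (B + 1 / Real.log 2) := by
      apply Finset.sum_le_sum
      intro x hx
      have hqp : q x < p x := (Finset.mem_filter.mp hx).2
      have hpx : 0 < p x := lt_trans (hq0 x) hqp
      have hsub : 0 < p x - q x := by linarith
      have e1 : p x * Real.logb 2 (p x / q x)
          = (p x - q x) * Real.logb 2 (p x / q x) + q x * Real.logb 2 (p x / q x) := by ring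
      rw [e1]
      have b1 : (p x - q x) * Real.logb 2 (p x / q x) ≤ (p x - q x) * B :=
        mul_le_mul_of_nonneg_left (hB x hqp) hsub.le
      have b2 : q x * Real.logb 2 (p x / q x) ≤ (p x - q x) * (1 / Real.log 2) := by
        have hlog : Real.log (p x / q x) ≤ p x / q x - 1 :=
          Real.log_le_sub_one_of_pos (div_pos hpx (hq0 x))
        have hpq : q x * (p x / q x) = p x := by
          rw [mul_comm, div_mul_cancel₀ _ (ne_of_gt (hq0 x))]
        have hmain : q x * Real.log (p x / q x) ≤ p x - q x := by
          nlinarith [mul_le_mul_of_nonneg_left hlog (hq0 x).le,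
            mul_sub (q x) (p x / q x) 1]
        have e2 : q x * Real.logb 2 (p x / q x)
            = (q x * Real.log (p x / q x)) / Real.log 2 := by
          rw [Real.logb]; ring
        have e3 : (p x - q x) * (1 / Real.log 2) = (p x - q x) / Real.log 2 := by ring
        rw [e2, e3, div_le_div_iff_of_pos_right hlog2]
        exact hmain
      linarith
    linarith
  calc KL p q ≤ ∑ x ∈ Finset.univ.filter (fun x => q x < p x),
      (p x - q x) * (B + 1 / Real.log 2) := key
    _ = (B + 1 / Real.log 2) * TV p q := by
        rw [← Finset.sum_mul, tv_eq_sum_filter p q hp1 hq1]; ring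

lemma kl_nonneg' {α : Type*} [Fintype α] (p q : α → ℝ)
    (hp0 : ∀ x, 0 ≤ p x) (hp1 : ∑ x, p x = 1)
    (hq0 : ∀ x, 0 < q x) (hq1 : ∑ x, q x = 1) :
    0 ≤ KL p q := by
  classical
  have hlog2 : (0:ℝ) < Real.log 2 := Real.log_pos one_lt_two
  have key : ∀ x, p x - q x ≤ p x * Real.log (p x / q x) := by
    intro x
    rcases eq_or_lt_of_le (hp0 x) with h | h
    · simp [← h]; exact (hq0 x).le
    · have h1 : Real.log (q x / p x) ≤ q x / p x - 1 :=
        Real.log_le_sub_one_of_pos (div_pos (hq0 x) h)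
      have h2 : Real.log (p x / q x) = - Real.log (q x / p x) := by
        rw [← Real.log_inv]; congr 1; rw [inv_div]
      have h3 : p x * (q x / p x - 1) = q x - p x := by field_simp
      nlinarith [mul_le_mul_of_nonneg_left h1 h.le]
  have hsum : 0 ≤ ∑ x, p x * Real.log (p x / q x) := by
    have : ∑ x, (p x - q x) ≤ ∑ x, p x * Real.log (p x / q x) :=
      Finset.sum_le_sum fun x _ => key x
    rw [Finset.sum_sub_distrib, hp1, hq1] at this; linarith
  have : KL p q = (∑ x, p x * Real.log (p x / q x)) / Real.log 2 := by
    rw [KL, Finset.sum_div]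
    apply Finset.sum_congr rfl
    intro x _
    rw [Real.logb, mul_div_assoc]
  rw [this]
  positivity

end aux

/-- Reverse-Pinsker-type bound: for a full-support PMF `Q` on a finite set,
there is `k > 0` (depending only on the alphabet and on `Q`) with
`D(P ‖ Q^{⊗n}) ≤ k (n + log₂(1/V(P,Q^{⊗n}))) V(P,Q^{⊗n})` whenever
`0 < V(P,Q^{⊗n}) ≤ 1/2`; consequently exponential decay of the total variation distance
forces the KL divergence to vanish. -/
theorem stmt3 {𝒵 : Type*} [Fintype 𝒵] (Q : 𝒵 → ℝ)
    (hQpos : ∀ z, 0 < Q z) (hQ1 : ∑ z, Q z = 1) :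
    (∃ k : ℝ, 0 < k ∧
      ∀ n : ℕ, 1 ≤ n → ∀ P : (Fin n → 𝒵) → ℝ,
        (∀ f, 0 ≤ P f) → (∑ f, P f = 1) →
        0 < TV P (fun f => ∏ i, Q (f i)) →
        TV P (fun f => ∏ i, Q (f i)) ≤ 1 / 2 →
        KL P (fun f => ∏ i, Q (f i))
          ≤ k * ((n : ℝ) + Real.logb 2 (1 / TV P (fun f => ∏ i, Q (f i))))
              * TV P (fun f => ∏ i, Q (f i)))
    ∧ (∀ P : (n : ℕ) → (Fin n → 𝒵) → ℝ,
        (∀ n f, 0 ≤ P n f) → (∀ n, ∑ f, P n f = 1) →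
        ∀ c γ : ℝ, 0 < c → 0 < γ →
        (∀ n : ℕ, TV (P n) (fun f => ∏ i, Q (f i)) ≤ c * (2 : ℝ) ^ (-(γ * (n : ℝ)))) →
        Filter.Tendsto (fun n : ℕ => KL (P n) (fun f => ∏ i, Q (f i)))
          Filter.atTop (nhds 0)) := by
  
  classical
  have hlog2 : (0:ℝ) < Real.log 2 := Real.log_pos one_lt_two
  have hlog2half : (1:ℝ) / 2 < Real.log 2 := by
    have := Real.log_two_gt_d9; linarith
  have hne : Nonempty 𝒵 := by
    rcases isEmpty_or_nonempty 𝒵 with h | h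
    · exfalso; rw [Finset.univ_eq_empty, Finset.sum_empty] at hQ1; norm_num at hQ1
    · exact h
  obtain ⟨z₀, -, hz₀⟩ := Finset.exists_min_image Finset.univ Q
    ⟨Classical.arbitrary 𝒵, Finset.mem_univ _⟩
  set m : ℝ := Q z₀ with hm
  have hm0 : 0 < m := hQpos z₀
  have hm1 : m ≤ 1 := by
    have := Finset.single_le_sum (f := Q) (fun i _ => (hQpos i).le) (Finset.mem_univ z₀)
    rw [hQ1] at this; exact this
  set L : ℝ := Real.logb 2 (1 / m) with hL
  have hL0 : 0 ≤ L := Real.logb_nonneg one_lt_two (by rw [le_div_iff₀ hm0]; linarith)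
  have hQnpos : ∀ (n : ℕ) (f : Fin n → 𝒵), 0 < ∏ i, Q (f i) :=
    fun n f => Finset.prod_pos fun i _ => hQpos _
  have hQn1 : ∀ n : ℕ, ∑ f : Fin n → 𝒵, ∏ i, Q (f i) = 1 := by
    intro n; rw [← Fintype.sum_pow, hQ1, one_pow]
  have hQnge : ∀ (n : ℕ) (f : Fin n → 𝒵), m ^ n ≤ ∏ i, Q (f i) := by
    intro n f
    calc m ^ n = ∏ _i : Fin n, m := by
          rw [Finset.prod_const, Finset.card_univ, Fintype.card_fin]
      _ ≤ ∏ i, Q (f i) :=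
          Finset.prod_le_prod (fun i _ => hm0.le) (fun i _ => hz₀ (f i) (Finset.mem_univ _))
  have hbound : ∀ (n : ℕ) (P : (Fin n → 𝒵) → ℝ), (∀ f, 0 ≤ P f) → (∑ f, P f = 1) →
      KL P (fun f => ∏ i, Q (f i))
        ≤ ((n : ℝ) * L + 1 / Real.log 2) * TV P (fun f => ∏ i, Q (f i)) := by
    intro n P hP0 hP1
    apply kl_le_tv P _ hP0 hP1 (hQnpos n) (hQn1 n)
    intro f hf
    have hPle1 : P f ≤ 1 := by
      have := Finset.single_le_sum (f := P) (fun i _ => hP0 i) (Finset.mem_univ f)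
      rw [hP1] at this; exact this
    have hPf : 0 < P f := lt_trans (hQnpos n f) hf
    have h1 : P f / (∏ i, Q (f i)) ≤ (1 / m) ^ n := by
      calc P f / (∏ i, Q (f i)) ≤ 1 / (∏ i, Q (f i)) := by
            gcongr
            exact (hQnpos n f).le
        _ ≤ 1 / m ^ n := by
            apply one_div_le_one_div_of_le (pow_pos hm0 n) (hQnge n f)
        _ = (1 / m) ^ n := by rw [one_div_pow]
    calc Real.logb 2 (P f / ∏ i, Q (f i)) ≤ Real.logb 2 ((1 / m) ^ n) :=
          Real.logb_le_logb_of_le one_lt_two (div_pos hPf (hQnpos n f)) h1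
      _ = (n : ℝ) * L := by rw [Real.logb_pow]
  constructor
  · refine ⟨L + 2, by linarith, ?_⟩
    intro n hn P hP0 hP1 hTV0 hTVhalf
    set V : ℝ := TV P (fun f => ∏ i, Q (f i)) with hV
    have hlogV : 1 ≤ Real.logb 2 (1 / V) := by
      have h2 : (2:ℝ) ≤ 1 / V := by
        rw [le_div_iff₀ hTV0]; linarith
      calc (1:ℝ) = Real.logb 2 2 := (Real.logb_self_eq_one one_lt_two).symm
        _ ≤ Real.logb 2 (1 / V) := Real.logb_le_logb_of_le one_lt_two two_pos h2
    have hinv : 1 / Real.log 2 ≤ 2 := by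
      rw [div_le_iff₀ hlog2]; linarith
    have hcoef : (n : ℝ) * L + 1 / Real.log 2
        ≤ (L + 2) * ((n : ℝ) + Real.logb 2 (1 / V)) := by
      have hn1 : (1:ℝ) ≤ (n : ℝ) := by exact_mod_cast hn
      nlinarith [mul_le_mul_of_nonneg_left hlogV (by linarith : (0:ℝ) ≤ L + 2)]
    calc KL P (fun f => ∏ i, Q (f i)) ≤ ((n : ℝ) * L + 1 / Real.log 2) * V :=
          hbound n P hP0 hP1
      _ ≤ ((L + 2) * ((n : ℝ) + Real.logb 2 (1 / V))) * V :=
          mul_le_mul_of_nonneg_right hcoef hTV0.le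
  · intro P hP0 hP1 c γ hc hγ hTV
    set r : ℝ := (2:ℝ) ^ (-γ) with hr
    have hr0 : 0 < r := Real.rpow_pos_of_pos two_pos _
    have hr1 : r < 1 := Real.rpow_lt_one_of_one_lt_of_neg one_lt_two (by linarith)
    have hrn : ∀ n : ℕ, (2:ℝ) ^ (-(γ * (n:ℝ))) = r ^ n := by
      intro n
      rw [show -(γ * (n:ℝ)) = (-γ) * (n:ℝ) by ring, Real.rpow_mul (by norm_num),
        Real.rpow_natCast]
    have hg : Filter.Tendsto
        (fun n : ℕ => (L * c) * ((n:ℝ) * r ^ n) + (c * (1 / Real.log 2)) * r ^ n)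
        Filter.atTop (nhds 0) := by
      have t1 := (tendsto_self_mul_const_pow_of_lt_one hr0.le hr1).const_mul (L * c)
      have t2 := (tendsto_pow_atTop_nhds_zero_of_lt_one hr0.le hr1).const_mul
        (c * (1 / Real.log 2))
      have := t1.add t2
      simpa using this
    apply squeeze_zero (fun n => kl_nonneg' (P n) _ (hP0 n) (hP1 n) (hQnpos n) (hQn1 n)) _ hg
    intro n
    have h1 : KL (P n) (fun f => ∏ i, Q (f i))
        ≤ ((n : ℝ) * L + 1 / Real.log 2) * TV (P n) (fun f => ∏ i, Q (f i)) :=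
      hbound n (P n) (hP0 n) (hP1 n)
    have h2 : ((n : ℝ) * L + 1 / Real.log 2) * TV (P n) (fun f => ∏ i, Q (f i))
        ≤ ((n : ℝ) * L + 1 / Real.log 2) * (c * (2:ℝ) ^ (-(γ * (n:ℝ)))) := by
      apply mul_le_mul_of_nonneg_left (hTV n)
      positivity
    have h3 : ((n : ℝ) * L + 1 / Real.log 2) * (c * (2:ℝ) ^ (-(γ * (n:ℝ))))
        = (L * c) * ((n:ℝ) * r ^ n) + (c * (1 / Real.log 2)) * r ^ n := by
      rw [hrn n]; ring
    linarith
end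

section
/- Let 0 < ε < 1/2. Over the noiseless-feedback rewrite channel with crossover ε, let U ~ Bern(α), X₁ = U, and X₂ = no-rewrite if U = Y₁ and X₂ = U otherwise. Then P(Y₂ ≠ u | U = u) = ε² for each u ∈ {0,1} with P(U=u) > 0, and P(Y₂ = 1) = α(1−ε²) + (1−α)ε². Moreover, the choice α = ε(1−ε)/(1−2ε²) satisfies 0 < α < 1, yields P(Y₂ = 1) = ε, and gives I(U; Y₂) = h_b(ε) − h_b(ε²). -/
open Classical

lemma key6 (ε α : ℝ) (hα0 : 0 < α) (hα1 : α < 1) (hε0 : 0 < ε) (hε1 : ε < 1) :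
    -(α * Real.logb 2 α + (1 - α) * Real.logb 2 (1 - α))
    + -(ε * Real.logb 2 ε + (1 - ε) * Real.logb 2 (1 - ε))
    - -((α * (1 - ε ^ 2)) * Real.logb 2 (α * (1 - ε ^ 2))
      + (α * ε ^ 2) * Real.logb 2 (α * ε ^ 2)
      + ((1 - α) * ε ^ 2) * Real.logb 2 ((1 - α) * ε ^ 2)
      + ((1 - α) * (1 - ε ^ 2)) * Real.logb 2 ((1 - α) * (1 - ε ^ 2)))
    = hb ε - hb (ε ^ 2) := by
  have h1 : α ≠ 0 := hα0.ne'
  have h2 : (1 - α) ≠ 0 := by nlinarith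
  have h3 : (ε ^ 2) ≠ 0 := by positivity
  have h4 : (1 - ε ^ 2) ≠ 0 := by nlinarith
  rw [Real.logb_mul h1 h4, Real.logb_mul h1 h3, Real.logb_mul h2 h3, Real.logb_mul h2 h4, hb, hb]
  ring


/-- Noiseless-feedback rewrite channel with crossover `ε`, scheme
`U ~ Bern(α)`, `X₁ = U`, `X₂ = no-rewrite` iff `U = Y₁` (else rewrite with `U`), realized on
`Ω = Bool³` with coordinates `(U, E₁, E₂)` carrying independent Bernoulli weights.
Then `P(Y₂ ≠ u | U = u) = ε²`, `P(Y₂ = 1) = α(1−ε²) + (1−α)ε²`, the choice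
`α = ε(1−ε)/(1−2ε²)` lies in `(0,1)`, yields `P(Y₂=1) = ε` and
`I(U;Y₂) = h_b(ε) − h_b(ε²)`. -/
theorem stmt6 (ε α : ℝ) (hε0 : 0 < ε) (hε1 : ε < 1 / 2)
    (hα0 : 0 ≤ α) (hα1 : α ≤ 1) :
    let μ : Bool × Bool × Bool → ℝ :=
      fun ω => bern α ω.1 * bern ε ω.2.1 * bern ε ω.2.2
    let U : Bool × Bool × Bool → Bool := fun ω => ω.1
    let Y1 : Bool × Bool × Bool → Bool := fun ω => Bool.xor (U ω) ω.2.1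
    let X2 : Bool × Bool × Bool → Option Bool :=
      fun ω => if U ω = Y1 ω then none else some (U ω)
    let Y2 : Bool × Bool × Bool → Bool :=
      fun ω => match X2 ω with
        | none => Y1 ω
        | some b => Bool.xor b ω.2.2
    (∀ u : Bool, pr μ (fun ω => U ω = u) ≠ 0 →
        pr μ (fun ω => Y2 ω ≠ u ∧ U ω = u) / pr μ (fun ω => U ω = u) = ε ^ 2)
    ∧ pr μ (fun ω => Y2 ω = true) = α * (1 - ε ^ 2) + (1 - α) * ε ^ 2
    ∧ (0 < ε * (1 - ε) / (1 - 2 * ε ^ 2) ∧ ε * (1 - ε) / (1 - 2 * ε ^ 2) < 1)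
    ∧ (α = ε * (1 - ε) / (1 - 2 * ε ^ 2) →
        pr μ (fun ω => Y2 ω = true) = ε
        ∧ Iinfo μ U Y2 = hb ε - hb (ε ^ 2)) := by
  intro μ U Y1 X2 Y2
  have hden : (0:ℝ) < 1 - 2 * ε ^ 2 := by nlinarith
  have hpart2 : pr μ (fun ω => Y2 ω = true) = α * (1 - ε ^ 2) + (1 - α) * ε ^ 2 := by
    simp [pr, μ, U, Y1, X2, Y2, bern, Fintype.sum_prod_type, Fintype.sum_bool]
    ring
  refine ⟨?_, hpart2, ⟨div_pos (mul_pos hε0 (by linarith)) hden, ?_⟩, ?_⟩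
  · intro u hu
    have hU : pr μ (fun ω => U ω = u) = bern α u := by
      cases u <;> · simp [pr, μ, U, bern, Fintype.sum_prod_type, Fintype.sum_bool]; ring
    have hN : pr μ (fun ω => Y2 ω ≠ u ∧ U ω = u) = bern α u * ε ^ 2 := by
      cases u <;> · simp [pr, μ, U, Y1, X2, Y2, bern, Fintype.sum_prod_type, Fintype.sum_bool]; ring
    rw [hU] at hu ⊢
    rw [hN, mul_comm, mul_div_assoc, div_self hu, mul_one]
  · rw [div_lt_one hden]; nlinarith
  · intro hα
    have hα0' : 0 < α := by rw [hα]; exact div_pos (mul_pos hε0 (by linarith)) hden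
    have hα1' : α < 1 := by rw [hα, div_lt_one hden]; nlinarith
    have hY : α * (1 - ε ^ 2) + (1 - α) * ε ^ 2 = ε := by
      rw [hα, div_mul_eq_mul_div, one_sub_div hden.ne', div_mul_eq_mul_div, ← add_div,
        div_eq_iff hden.ne']; ring
    refine ⟨by rw [hpart2, hY], ?_⟩
    have pUt : pOf μ U true = α := by
      simp [pOf, μ, U, bern, Fintype.sum_prod_type, Fintype.sum_bool]; ring
    have pUf : pOf μ U false = 1 - α := by
      simp [pOf, μ, U, bern, Fintype.sum_prod_type, Fintype.sum_bool]; ring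
    have pYt : pOf μ Y2 true = ε := by
      rw [← hY]; simp [pOf, μ, U, Y1, X2, Y2, bern, Fintype.sum_prod_type, Fintype.sum_bool]; ring
    have pYf : pOf μ Y2 false = 1 - ε := by
      rw [show (1:ℝ) - ε = 1 - (α * (1 - ε ^ 2) + (1 - α) * ε ^ 2) by rw [hY]]
      simp [pOf, μ, U, Y1, X2, Y2, bern, Fintype.sum_prod_type, Fintype.sum_bool]; ring
    have ptt : pOf μ (fun ω => (U ω, Y2 ω)) (true, true) = α * (1 - ε ^ 2) := by
      simp [pOf, μ, U, Y1, X2, Y2, bern, Fintype.sum_prod_type, Fintype.sum_bool]; ring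
    have ptf : pOf μ (fun ω => (U ω, Y2 ω)) (true, false) = α * ε ^ 2 := by
      simp [pOf, μ, U, Y1, X2, Y2, bern, Fintype.sum_prod_type, Fintype.sum_bool]; ring
    have pft : pOf μ (fun ω => (U ω, Y2 ω)) (false, true) = (1 - α) * ε ^ 2 := by
      simp [pOf, μ, U, Y1, X2, Y2, bern, Fintype.sum_prod_type, Fintype.sum_bool]; ring
    have pff : pOf μ (fun ω => (U ω, Y2 ω)) (false, false) = (1 - α) * (1 - ε ^ 2) := by
      simp [pOf, μ, U, Y1, X2, Y2, bern, Fintype.sum_prod_type, Fintype.sum_bool]; ring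
    have hkey := key6 ε α hα0' hα1' hε0 (by linarith)
    rw [Iinfo, Hent, Hent, Hent, Fintype.sum_bool, Fintype.sum_bool, Fintype.sum_prod_type,
      Fintype.sum_bool]
    simp only [Fintype.sum_bool]
    rw [pUt, pUf, pYt, pYf, ptt, ptf, pft, pff]
    linear_combination hkey
end

section
/- Let P̃_A > 0, P̃_X ≥ 0, T ≥ 0, σ_Y² > 0 and ρ_XA, ρ_XS ∈ ℝ, and assume D := P̃_X(1 − ρ_XA² − ρ_XS²) + (√T + √P̃_X·ρ_XS)² + σ_Y² > 0. Define the row vector Σ₁ = (0, √(T·P̃_X)·ρ_XS + T), the column vector Σ₂ = Σ₁ᵀ, and the 2×2 matrix Σ₃ with entries Σ₃[1,1] = P̃_A, Σ₃[1,2] = Σ₃[2,1] = √(P̃_A·P̃_X)·ρ_XA + P̃_A, and Σ₃[2,2] = P̃_A + P̃_X + T + σ_Y² + 2√(P̃_A·P̃_X)·ρ_XA + 2√(T·P̃_X)·ρ_XS. Then det Σ₃ = P̃_A·D > 0, so Σ₃ is invertible, and T − Σ₁·Σ₃⁻¹·Σ₂ = ( T·P̃_X(1 − ρ_XS² − ρ_XA²)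 + T·σ_Y² ) / ( P̃_X(1 − ρ_XS² − ρ_XA²) + (√T + √P̃_X·ρ_XS)² + σ_Y² ). -/
open Matrix

/-- MMSE-type matrix computation for the Gaussian converse:
with `Σ₁ = (0, √(T·P̃_X)ρ_XS + T)`, `Σ₂ = Σ₁ᵀ` and the 2×2 covariance matrix `Σ₃`,
one has `det Σ₃ = P̃_A·D > 0` (so `Σ₃` is invertible) and
`T − Σ₁ Σ₃⁻¹ Σ₂ = (T P̃_X(1−ρ_XS²−ρ_XA²) + T σ_Y²)
  / (P̃_X(1−ρ_XS²−ρ_XA²) + (√T+√P̃_X ρ_XS)² + σ_Y²)`. -/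
theorem stmt14 (PA PX T σY2 ρXA ρXS : ℝ)
    (hPA : 0 < PA) (hPX : 0 ≤ PX) (hT : 0 ≤ T) (hσ : 0 < σY2)
    (hD : 0 < PX * (1 - ρXA ^ 2 - ρXS ^ 2)
        + (Real.sqrt T + Real.sqrt PX * ρXS) ^ 2 + σY2) :
    let S1 : Matrix (Fin 1) (Fin 2) ℝ := !![0, Real.sqrt (T * PX) * ρXS + T]
    let S2 : Matrix (Fin 2) (Fin 1) ℝ := S1ᵀ
    let S3 : Matrix (Fin 2) (Fin 2) ℝ :=
      !![PA, Real.sqrt (PA * PX) * ρXA + PA;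
         Real.sqrt (PA * PX) * ρXA + PA,
         PA + PX + T + σY2 + 2 * Real.sqrt (PA * PX) * ρXA
           + 2 * Real.sqrt (T * PX) * ρXS]
    S3.det = PA * (PX * (1 - ρXA ^ 2 - ρXS ^ 2)
        + (Real.sqrt T + Real.sqrt PX * ρXS) ^ 2 + σY2)
    ∧ 0 < S3.det
    ∧ IsUnit S3
    ∧ T - (S1 * S3⁻¹ * S2) 0 0
        = (T * PX * (1 - ρXS ^ 2 - ρXA ^ 2) + T * σY2)
          / (PX * (1 - ρXS ^ 2 - ρXA ^ 2)
              + (Real.sqrt T + Real.sqrt PX * ρXS) ^ 2 + σY2) := by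
  intro S1 S2 S3
  have hTpx : Real.sqrt (T * PX) = Real.sqrt T * Real.sqrt PX := Real.sqrt_mul hT PX
  have hPApx : Real.sqrt (PA * PX) = Real.sqrt PA * Real.sqrt PX := Real.sqrt_mul hPA.le PX
  have hT2 : Real.sqrt T ^ 2 = T := Real.sq_sqrt hT
  have hPX2 : Real.sqrt PX ^ 2 = PX := Real.sq_sqrt hPX
  have hPA2 : Real.sqrt PA ^ 2 = PA := Real.sq_sqrt hPA.le
  have hdet : S3.det = PA * (PX * (1 - ρXA ^ 2 - ρXS ^ 2)
      + (Real.sqrt T + Real.sqrt PX * ρXS) ^ 2 + σY2) := by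
    simp only [S3, Matrix.det_fin_two_of, hTpx, hPApx]
    linear_combination (-PA) * hT2 - PA * ρXS ^ 2 * hPX2 - PA * ρXA ^ 2 * hPX2
      - Real.sqrt PX ^ 2 * ρXA ^ 2 * hPA2
  have hdpos : 0 < S3.det := by rw [hdet]; positivity
  have hunit : IsUnit S3 := (Matrix.isUnit_iff_isUnit_det S3).2 (isUnit_iff_ne_zero.2 hdpos.ne')
  refine ⟨hdet, hdpos, hunit, ?_⟩
  have hinv : S3⁻¹ = (S3.det)⁻¹ • !![S3 1 1, -S3 0 1; -S3 1 0, S3 0 0] := by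
    rw [Matrix.inv_def, Matrix.adjugate_fin_two, Ring.inverse_eq_inv']
  have hDne : PX * (1 - ρXA ^ 2 - ρXS ^ 2)
      + (Real.sqrt T + Real.sqrt PX * ρXS) ^ 2 + σY2 ≠ 0 := hD.ne'
  have hentry : (S1 * S3⁻¹ * S2) 0 0
      = (Real.sqrt (T * PX) * ρXS + T) ^ 2 * PA / S3.det := by
    rw [hinv]
    simp [S1, S2, S3, Matrix.mul_apply, Fin.sum_univ_two, Matrix.smul_apply, div_eq_inv_mul]
    ring
  have hc2 : (Real.sqrt (T * PX) * ρXS + T) ^ 2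
      = T * (Real.sqrt T + Real.sqrt PX * ρXS) ^ 2 := by
    rw [hTpx]
    linear_combination (Real.sqrt PX ^ 2 * ρXS ^ 2 - T) * hT2
  rw [hentry, hdet, hc2]
  rw [show T * (Real.sqrt T + Real.sqrt PX * ρXS) ^ 2 * PA
      = PA * (T * (Real.sqrt T + Real.sqrt PX * ρXS) ^ 2) from by ring,
    mul_div_mul_left _ _ hPA.ne']
  have hDne2 : PX * (1 - ρXS ^ 2 - ρXA ^ 2)
      + (Real.sqrt T + Real.sqrt PX * ρXS) ^ 2 + σY2 ≠ 0 := by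
    rw [show PX * (1 - ρXS ^ 2 - ρXA ^ 2) = PX * (1 - ρXA ^ 2 - ρXS ^ 2) from by ring]
    exact hDne
  field_simp
  ring
end

section
/- Let T > 0 and σ² > 0. For all real numbers x and a with a < T + σ², one has ( (T + σ²)·( 4T·x − (x + a)² + 4T·σ² ) ) / ( 4T·σ²·( T + σ² − a ) ) ≤ 1 + T/σ², with equality if and only if x + a = 2T. -/
/-- For `T > 0`, `σ² > 0` and reals `x, a` with `a < T + σ²`:
`((T+σ²)(4Tx − (x+a)² + 4Tσ²)) / (4Tσ²(T+σ²−a)) ≤ 1 + T/σ²`,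
with equality iff `x + a = 2T`. -/
theorem stmt16 (T σ2 x a : ℝ) (hT : 0 < T) (hσ : 0 < σ2) (ha : a < T + σ2) :
    ((T + σ2) * (4 * T * x - (x + a) ^ 2 + 4 * T * σ2))
        / (4 * T * σ2 * (T + σ2 - a)) ≤ 1 + T / σ2
    ∧ (((T + σ2) * (4 * T * x - (x + a) ^ 2 + 4 * T * σ2))
          / (4 * T * σ2 * (T + σ2 - a)) = 1 + T / σ2
        ↔ x + a = 2 * T) := by
  have hTa : 0 < T + σ2 - a := by linarith
  have hD : 0 < 4 * T * σ2 * (T + σ2 - a) := by positivity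
  have key : ((T + σ2) * (4 * T * x - (x + a) ^ 2 + 4 * T * σ2))
        / (4 * T * σ2 * (T + σ2 - a))
      = (1 + T / σ2) - (T + σ2) * (x + a - 2 * T) ^ 2
        / (4 * T * σ2 * (T + σ2 - a)) := by
    field_simp
    ring
  have hsq : 0 ≤ (T + σ2) * (x + a - 2 * T) ^ 2 / (4 * T * σ2 * (T + σ2 - a)) := by
    positivity
  constructor
  · rw [key]; linarith
  · rw [key]
    constructor
    · intro h
      have : (T + σ2) * (x + a - 2 * T) ^ 2 / (4 * T * σ2 * (T + σ2 - a)) = 0 := by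
        linarith
      have h2 : (T + σ2) * (x + a - 2 * T) ^ 2 = 0 := by
        rcases div_eq_zero_iff.mp this with h | h
        · exact h
        · exact absurd h hD.ne'
      have h3 : (x + a - 2 * T) ^ 2 = 0 := by
        have : (0:ℝ) < T + σ2 := by linarith
        exact by nlinarith [sq_nonneg (x + a - 2 * T)]
      have := pow_eq_zero_iff (n := 2) (by norm_num) |>.mp h3
      linarith
    · intro h
      have : x + a - 2 * T = 0 := by linarith
      rw [this]
      ring
end
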